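/- For all n ≥ 1, E(n) ≤ 3^(n/3), i.e., E(n)^3 ≤ 3^n, where E(n) is the largest integer with complexity n. -/
import Mathlib


/-- `CanRepr n k` : `n` can be written as an expression in `1, +, ·` using `k` ones. -/
inductive CanRepr : ℕ → ℕ → Prop
  | one : CanRepr 1 1
  | add {a b j k : ℕ} : CanRepr a j → CanRepr b k → CanRepr (a + b) (j + k)
  | mul {a b j k : ℕ} : CanRepr a j → CanRepr b k → CanRepr (a * b) (j + k)

/-- Integer complexity `‖n‖`: least number of ones in an expression for `n`. -/
noncomputable def cpx (n : ℕ) : ℕ := sInf {k | CanRepr n k}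

/-- `E n` : the largest integer of complexity `n`. -/
noncomputable def E (n : ℕ) : ℕ := sSup {m | cpx m = n}

lemma canRepr_pos {m k : ℕ} (h : CanRepr m k) : 1 ≤ m ∧ 1 ≤ k := by
  induction h with
  | one => exact ⟨le_refl _, le_refl _⟩
  | add _ _ ih1 ih2 => omega
  | mul _ _ ih1 ih2 =>
    refine ⟨?_, by omega⟩
    calc 1 = 1 * 1 := by norm_num
    _ ≤ _ := Nat.mul_le_mul ih1.1 ih2.1

lemma cube_add_one {b k : ℕ} (hb : 1 ≤ b) (hk : 1 ≤ k) (h : b ^ 3 ≤ 3 ^ k) :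
    (1 + b) ^ 3 ≤ 3 ^ (k + 1) := by
  rcases Nat.lt_or_ge b 3 with h3 | h3
  · interval_cases b
    · calc (1 + 1) ^ 3 = 8 := by norm_num
      _ ≤ 3 ^ (1 + 1) := by norm_num
      _ ≤ 3 ^ (k + 1) := Nat.pow_le_pow_right (by norm_num) (by omega)
    · have hk2 : 2 ≤ k := by
        by_contra hc
        interval_cases k <;> simp_all
      calc (1 + 2) ^ 3 = 27 := by norm_num
      _ ≤ 3 ^ (2 + 1) := by norm_num
      _ ≤ 3 ^ (k + 1) := Nat.pow_le_pow_right (by norm_num) (by omega)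
  · have h9 : 9 ≤ b * b := Nat.mul_le_mul h3 h3
    calc (1 + b) ^ 3 ≤ 3 * b ^ 3 := by nlinarith [h9, h3]
    _ ≤ 3 * 3 ^ k := by omega
    _ = 3 ^ (k + 1) := by ring

lemma canRepr_cube {m k : ℕ} (h : CanRepr m k) : m ^ 3 ≤ 3 ^ k := by
  induction h with
  | one => norm_num
  | @add a b j k ha hb ih1 ih2 =>
    obtain ⟨ha1, hj1⟩ := canRepr_pos ha
    obtain ⟨hb1, hk1⟩ := canRepr_pos hb
    rcases Nat.lt_or_ge a 2 with h2 | h2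
    · have haeq : a = 1 := by omega
      subst haeq
      calc (1 + b) ^ 3 ≤ 3 ^ (k + 1) := cube_add_one hb1 hk1 ih2
      _ ≤ 3 ^ (j + k) := Nat.pow_le_pow_right (by norm_num) (by omega)
    rcases Nat.lt_or_ge b 2 with h3 | h3
    · have hbeq : b = 1 := by omega
      subst hbeq
      calc (a + 1) ^ 3 = (1 + a) ^ 3 := by ring
      _ ≤ 3 ^ (j + 1) := cube_add_one ha1 hj1 ih1
      _ ≤ 3 ^ (j + k) := Nat.pow_le_pow_right (by norm_num) (by omega)
    · have hab : a + b ≤ a * b := by nlinarith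
      calc (a + b) ^ 3 ≤ (a * b) ^ 3 := Nat.pow_le_pow_left hab 3
      _ = a ^ 3 * b ^ 3 := by ring
      _ ≤ 3 ^ j * 3 ^ k := Nat.mul_le_mul ih1 ih2
      _ = 3 ^ (j + k) := (pow_add 3 j k).symm
  | @mul a b j k ha hb ih1 ih2 =>
    calc (a * b) ^ 3 = a ^ 3 * b ^ 3 := by ring
    _ ≤ 3 ^ j * 3 ^ k := Nat.mul_le_mul ih1 ih2
    _ = 3 ^ (j + k) := (pow_add 3 j k).symm

theorem E_le (n : ℕ) (hn : 1 ≤ n) : E n ^ 3 ≤ 3 ^ n := by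
  have key : ∀ m, cpx m = n → m ^ 3 ≤ 3 ^ n := by
    intro m hm
    have hne : {k | CanRepr m k}.Nonempty := by
      by_contra hc
      rw [Set.not_nonempty_iff_eq_empty] at hc
      simp [cpx, hc] at hm
      omega
    have := Nat.sInf_mem hne
    rw [show sInf {k | CanRepr m k} = cpx m from rfl, hm] at this
    exact canRepr_cube this
  have hbdd : BddAbove {m | cpx m = n} := by
    refine ⟨3 ^ n, fun m hm => ?_⟩
    have h3 := key m hm
    calc m ≤ m ^ 3 := Nat.le_self_pow (by norm_num) m
    _ ≤ 3 ^ n := h3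
  rcases Set.eq_empty_or_nonempty {m | cpx m = n} with he | hne
  · have hE : E n = 0 := by simp [E, he]
    rw [hE]
    exact Nat.zero_le _
  · exact key _ (Nat.sSup_mem hne hbdd)
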